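/- arXiv:2510.08335 — 3 statements merged into one kernel-verified Lean document; each statement's English description precedes it below -/
import Mathlib

section
/- Under the linear posterior performative drift with parameters a₁, a₂, a₃, a₄, the performative risk of a measurable classifier h satisfies PR(h) = (1 − a₂)·ℙ[h(X) = 1] − a₁·ℙ[Y = 1, h(X) = 1] + a₃·ℙ[Y = 1, h(X) = −1] + a₄·ℙ[h(X) = −1], where all probabilities on the right-hand side are with respect to the original distribution 𝒟. -/
open MeasureTheory ProbabilityTheory Set

noncomputable section

/-- `μt` is the linear posterior performative drift of `μ` induced by the classifier `h`
with parameters `a1, a2, a3, a4`: the shifted distribution is supported on labels `{-1, 1}`,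
has the same `𝒳`-marginal as `μ`, and its conditional label distribution satisfies
`ℙ̃_h[Y = 1 ∣ X = x] = a1 ℙ[Y = 1 ∣ X = x] + a2` on `{h = 1}` and
`ℙ̃_h[Y = 1 ∣ X = x] = a3 ℙ[Y = 1 ∣ X = x] + a4` on `{h = -1}`
(stated in integrated form over measurable subsets of each region). -/
def IsLinearDrift {𝒳 : Type*} [MeasurableSpace 𝒳] (μ μt : Measure (𝒳 × ℝ)) (h : 𝒳 → ℝ)
    (a1 a2 a3 a4 : ℝ) : Prop :=
  μt {p : 𝒳 × ℝ | p.2 ≠ 1 ∧ p.2 ≠ -1} = 0 ∧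
  (∀ A : Set 𝒳, MeasurableSet A →
    μt (A ×ˢ (Set.univ : Set ℝ)) = μ (A ×ˢ (Set.univ : Set ℝ))) ∧
  (∀ A : Set 𝒳, MeasurableSet A → A ⊆ {x | h x = 1} →
    (μt (A ×ˢ ({1} : Set ℝ))).toReal
      = a1 * (μ (A ×ˢ ({1} : Set ℝ))).toReal
        + a2 * (μ (A ×ˢ (Set.univ : Set ℝ))).toReal) ∧
  (∀ A : Set 𝒳, MeasurableSet A → A ⊆ {x | h x = -1} →
    (μt (A ×ˢ ({1} : Set ℝ))).toReal
      = a3 * (μ (A ×ˢ ({1} : Set ℝ))).toReal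
        + a4 * (μ (A ×ˢ (Set.univ : Set ℝ))).toReal)

/-- The performative risk `PR(h) = ℙ̃_h[h(X) ≠ Y]`. -/
def PRisk {𝒳 : Type*} [MeasurableSpace 𝒳] (μt : Measure (𝒳 × ℝ)) (h : 𝒳 → ℝ) : ℝ :=
  (μt {p : 𝒳 × ℝ | h p.1 ≠ p.2}).toReal

/-- Under the linear posterior performative drift with parameters
`a1, a2, a3, a4`, the performative risk of a measurable classifier `h` satisfies
`PR(h) = (1 − a2) ℙ[h(X) = 1] − a1 ℙ[Y = 1, h(X) = 1] + a3 ℙ[Y = 1, h(X) = −1]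
+ a4 ℙ[h(X) = −1]`, where the right-hand side probabilities are w.r.t. the original
distribution `μ`. -/
theorem performative_risk_formula
    {𝒳 : Type*} [MeasurableSpace 𝒳]
    (μ μt : Measure (𝒳 × ℝ)) [IsProbabilityMeasure μ] [IsProbabilityMeasure μt]
    (hμlab : μ {p : 𝒳 × ℝ | p.2 ≠ 1 ∧ p.2 ≠ -1} = 0)
    (h : 𝒳 → ℝ) (hmeas : Measurable h) (hval : ∀ x, h x = 1 ∨ h x = -1)
    (a1 a2 a3 a4 : ℝ)
    (ha2 : a2 ∈ Set.Icc (0 : ℝ) 1) (ha4 : a4 ∈ Set.Icc (0 : ℝ) 1)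
    (ha1 : a1 ∈ Set.Icc (-a2) (1 - a2)) (ha3 : a3 ∈ Set.Icc (-a4) (1 - a4))
    (hdrift : IsLinearDrift μ μt h a1 a2 a3 a4) :
    PRisk μt h
      = (1 - a2) * (μ {p : 𝒳 × ℝ | h p.1 = 1}).toReal
        - a1 * (μ {p : 𝒳 × ℝ | p.2 = 1 ∧ h p.1 = 1}).toReal
        + a3 * (μ {p : 𝒳 × ℝ | p.2 = 1 ∧ h p.1 = -1}).toReal
        + a4 * (μ {p : 𝒳 × ℝ | h p.1 = -1}).toReal := by
  obtain ⟨h0, hmarg, hpos, hneg⟩ := hdrift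
  set A1 : Set 𝒳 := {x | h x = 1} with hA1
  set A2 : Set 𝒳 := {x | h x = -1} with hA2
  have mA1 : MeasurableSet A1 := hmeas (measurableSet_singleton 1)
  have mA2 : MeasurableSet A2 := hmeas (measurableSet_singleton (-1))
  -- error set equals union of the two pieces up to μt-null set
  have hS : μt {p : 𝒳 × ℝ | h p.1 ≠ p.2}
      = μt (A1 ×ˢ ({-1} : Set ℝ)) + μt (A2 ×ˢ ({1} : Set ℝ)) := by
    have hdisj : Disjoint (A1 ×ˢ ({-1} : Set ℝ)) (A2 ×ˢ ({1} : Set ℝ)) := by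
      rw [Set.disjoint_left]
      rintro p ⟨_, hp2⟩ ⟨_, hq2⟩
      simp only [Set.mem_singleton_iff] at hp2 hq2
      rw [hp2] at hq2; norm_num at hq2
    have hunion : μt {p : 𝒳 × ℝ | h p.1 ≠ p.2}
        = μt ((A1 ×ˢ ({-1} : Set ℝ)) ∪ (A2 ×ˢ ({1} : Set ℝ))) := by
      apply le_antisymm
      · calc μt {p : 𝒳 × ℝ | h p.1 ≠ p.2}
            ≤ μt (((A1 ×ˢ ({-1} : Set ℝ)) ∪ (A2 ×ˢ ({1} : Set ℝ)))
                ∪ {p : 𝒳 × ℝ | p.2 ≠ 1 ∧ p.2 ≠ -1}) := by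
              apply measure_mono
              intro p hp
              rcases hval p.1 with h1 | h1
              · by_cases hy : p.2 = -1
                · exact Or.inl (Or.inl ⟨h1, hy⟩)
                · exact Or.inr ⟨fun hy1 => hp (h1.trans hy1.symm), hy⟩
              · by_cases hy : p.2 = 1
                · exact Or.inl (Or.inr ⟨h1, hy⟩)
                · exact Or.inr ⟨hy, fun hy1 => hp (h1.trans hy1.symm)⟩
          _ ≤ μt ((A1 ×ˢ ({-1} : Set ℝ)) ∪ (A2 ×ˢ ({1} : Set ℝ)))
                + μt {p : 𝒳 × ℝ | p.2 ≠ 1 ∧ p.2 ≠ -1} := measure_union_le _ _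
          _ = μt ((A1 ×ˢ ({-1} : Set ℝ)) ∪ (A2 ×ˢ ({1} : Set ℝ))) := by
              rw [h0, add_zero]
      · apply measure_mono
        rintro p (⟨hp1, hp2⟩ | ⟨hp1, hp2⟩) <;>
          simp only [Set.mem_singleton_iff] at hp2 <;>
          simp only [hA1, hA2, Set.mem_setOf_eq] at hp1 <;>
          simp only [Set.mem_setOf_eq, hp1, hp2] <;> norm_num
    rw [hunion, measure_union hdisj (mA2.prod (measurableSet_singleton 1))]
  -- split μt (A1 ×ˢ univ)
  have hsplit : μt (A1 ×ˢ (Set.univ : Set ℝ))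
      = μt (A1 ×ˢ ({1} : Set ℝ)) + μt (A1 ×ˢ ({-1} : Set ℝ)) := by
    have hdisj : Disjoint (A1 ×ˢ ({1} : Set ℝ)) (A1 ×ˢ ({-1} : Set ℝ)) := by
      rw [Set.disjoint_left]
      rintro p ⟨_, hp2⟩ ⟨_, hq2⟩
      simp only [Set.mem_singleton_iff] at hp2 hq2
      rw [hp2] at hq2; norm_num at hq2
    apply le_antisymm
    · calc μt (A1 ×ˢ (Set.univ : Set ℝ))
          ≤ μt (((A1 ×ˢ ({1} : Set ℝ)) ∪ (A1 ×ˢ ({-1} : Set ℝ)))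
              ∪ {p : 𝒳 × ℝ | p.2 ≠ 1 ∧ p.2 ≠ -1}) := by
            apply measure_mono
            rintro p ⟨hp1, -⟩
            by_cases hy : p.2 = 1
            · exact Or.inl (Or.inl ⟨hp1, hy⟩)
            · by_cases hy' : p.2 = -1
              · exact Or.inl (Or.inr ⟨hp1, hy'⟩)
              · exact Or.inr ⟨hy, hy'⟩
        _ ≤ μt ((A1 ×ˢ ({1} : Set ℝ)) ∪ (A1 ×ˢ ({-1} : Set ℝ)))
              + μt {p : 𝒳 × ℝ | p.2 ≠ 1 ∧ p.2 ≠ -1} := measure_union_le _ _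
        _ = μt ((A1 ×ˢ ({1} : Set ℝ)) ∪ (A1 ×ˢ ({-1} : Set ℝ))) := by
            rw [h0, add_zero]
        _ = μt (A1 ×ˢ ({1} : Set ℝ)) + μt (A1 ×ˢ ({-1} : Set ℝ)) :=
            measure_union hdisj (mA1.prod (measurableSet_singleton (-1)))
    · rw [← measure_union hdisj (mA1.prod (measurableSet_singleton (-1)))]
      apply measure_mono
      rintro p (⟨hp1, -⟩ | ⟨hp1, -⟩) <;> exact ⟨hp1, Set.mem_univ _⟩
  -- rewrite RHS sets as products
  have e1 : {p : 𝒳 × ℝ | h p.1 = 1} = A1 ×ˢ (Set.univ : Set ℝ) := by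
    ext p; simp [hA1, Set.mem_prod]
  have e2 : {p : 𝒳 × ℝ | p.2 = 1 ∧ h p.1 = 1} = A1 ×ˢ ({1} : Set ℝ) := by
    ext ⟨x, y⟩
    simp only [Set.mem_setOf_eq, Set.mem_prod, Set.mem_singleton_iff, hA1]; tauto
  have e3 : {p : 𝒳 × ℝ | p.2 = 1 ∧ h p.1 = -1} = A2 ×ˢ ({1} : Set ℝ) := by
    ext ⟨x, y⟩
    simp only [Set.mem_setOf_eq, Set.mem_prod, Set.mem_singleton_iff, hA2]; tauto
  have e4 : {p : 𝒳 × ℝ | h p.1 = -1} = A2 ×ˢ (Set.univ : Set ℝ) := by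
    ext p; simp [hA2, Set.mem_prod]
  -- real-number computations
  have ht1 : (μt (A1 ×ˢ ({1} : Set ℝ))).toReal
      = a1 * (μ (A1 ×ˢ ({1} : Set ℝ))).toReal
        + a2 * (μ (A1 ×ˢ (Set.univ : Set ℝ))).toReal :=
    hpos A1 mA1 (by intro x hx; exact hx)
  have ht2 : (μt (A2 ×ˢ ({1} : Set ℝ))).toReal
      = a3 * (μ (A2 ×ˢ ({1} : Set ℝ))).toReal
        + a4 * (μ (A2 ×ˢ (Set.univ : Set ℝ))).toReal :=
    hneg A2 mA2 (by intro x hx; exact hx)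
  have hm1 : μt (A1 ×ˢ (Set.univ : Set ℝ)) = μ (A1 ×ˢ (Set.univ : Set ℝ)) := hmarg A1 mA1
  have hsplitR : (μt (A1 ×ˢ (Set.univ : Set ℝ))).toReal
      = (μt (A1 ×ˢ ({1} : Set ℝ))).toReal + (μt (A1 ×ˢ ({-1} : Set ℝ))).toReal := by
    rw [hsplit, ENNReal.toReal_add (measure_ne_top _ _) (measure_ne_top _ _)]
  have hSR : PRisk μt h
      = (μt (A1 ×ˢ ({-1} : Set ℝ))).toReal + (μt (A2 ×ˢ ({1} : Set ℝ))).toReal := by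
    rw [PRisk, hS, ENNReal.toReal_add (measure_ne_top _ _) (measure_ne_top _ _)]
  rw [hSR, e1, e2, e3, e4]
  rw [hm1] at hsplitR
  linarith [hsplitR, ht1, ht2]

end
end

section
/- Under the linear posterior performative drift with parameters a₁, a₂, a₃, a₄, the performative empirical risk PRₙ(h) = (1/n) Σᵢ (α₁ h(Xᵢ) + α₂ Yᵢ + α₃ Yᵢ h(Xᵢ) + α₄) computed from n i.i.d. samples (X₁,Y₁),…,(Xₙ,Yₙ) drawn from 𝒟 is an unbiased estimator of the performative risk: 𝔼[PRₙ(h)] = PR(h), where α₁ = (2 − a₁ − 2a₂ − a₃ − 2a₄)/4, α₂ = (a₃ − a₁)/4, α₃ = (−a₁ − a₃)/4, α₄ = (2 − a₁ − 2a₂ + a₃ + 2a₄)/4. -/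
/-!
Almost surely both the label `y` and the prediction `h x` lie in `{1, -1}`, so the per-sample
loss `α1 h(x) + α2 y + α3 y h(x) + α4` is `μ`-a.e. a step function on the four cells
`{h = s} × {t}`, and its expectation is a linear combination of their `μ`-masses. The
performative risk is the `μt`-mass of the cells `{h = 1} × {-1}` and `{h = -1} × {1}`; the drift
prescribes `μt` on `{h = ±1} × {1}` and preserves the `X`-marginal, which turns it into a linear
combination of the same `μ`-masses. The coefficients `α` are exactly those making the two agree.
-/

open MeasureTheory ProbabilityTheory Set

noncomputable section

section SignLabels

variable {𝒳 : Type*} {h : 𝒳 → ℝ}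

def signCell (h : 𝒳 → ℝ) (s t : ℝ) : Set (𝒳 × ℝ) := {x | h x = s} ×ˢ {t}

theorem mem_signCell {p : 𝒳 × ℝ} {s t : ℝ} : p ∈ signCell h s t ↔ h p.1 = s ∧ p.2 = t :=
  Iff.rfl

variable [MeasurableSpace 𝒳] {ν : Measure (𝒳 × ℝ)}

theorem measurableSet_signCell (hh : Measurable h) (s t : ℝ) :
    MeasurableSet (signCell h s t) :=
  (hh (measurableSet_singleton s)).prod (measurableSet_singleton t)

theorem ae_label_eq_one_or_neg_one (hν : ν {p | p.2 ≠ 1 ∧ p.2 ≠ -1} = 0) :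
    ∀ᵐ p ∂ν, p.2 = 1 ∨ p.2 = -1 := by
  rw [ae_iff]
  simpa only [not_or] using hν

theorem measureReal_prod_univ_of_ae_label [IsFiniteMeasure ν]
    (hν : ∀ᵐ p ∂ν, p.2 = 1 ∨ p.2 = -1) {A : Set 𝒳} (hA : MeasurableSet A) :
    ν.real (A ×ˢ univ) = ν.real (A ×ˢ {1}) + ν.real (A ×ˢ {-1}) := by
  rw [← measureReal_union (disjoint_prod.2 (Or.inr (by norm_num)))
    (hA.prod (measurableSet_singleton _))]
  refine measureReal_congr (Filter.eventuallyEq_set.2 ?_)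
  filter_upwards [hν] with p hp
  simp only [mem_union, mem_prod, mem_univ, mem_singleton_iff]
  tauto

theorem PRisk_eq_of_ae_label [IsFiniteMeasure ν] (hν : ∀ᵐ p ∂ν, p.2 = 1 ∨ p.2 = -1)
    (hh : Measurable h) (hval : ∀ x, h x = 1 ∨ h x = -1) :
    PRisk ν h = ν.real (signCell h 1 (-1)) + ν.real (signCell h (-1) 1) := by
  have hdisj : Disjoint (signCell h 1 (-1)) (signCell h (-1) 1) :=
    disjoint_prod.2 <| Or.inl <| disjoint_left.2 fun x (h1 : h x = 1) (h2 : h x = -1) => by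
      linarith
  rw [PRisk, ← measureReal_def, ← measureReal_union hdisj (measurableSet_signCell hh _ _)]
  refine measureReal_congr (Filter.eventuallyEq_set.2 ?_)
  filter_upwards [hν] with p hp
  rcases hval p.1 with hx | hx <;> rcases hp with hy | hy <;> norm_num [mem_signCell, hx, hy]

theorem comp_ae_eq_sum_indicator_signCell (hν : ∀ᵐ p ∂ν, p.2 = 1 ∨ p.2 = -1)
    (hval : ∀ x, h x = 1 ∨ h x = -1) (φ : ℝ → ℝ → ℝ) :
    (fun p => φ (h p.1) p.2) =ᵐ[ν] fun p => ∑ s ∈ ({1, -1} : Finset ℝ),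
      ∑ t ∈ ({1, -1} : Finset ℝ), (signCell h s t).indicator (fun _ => φ s t) p := by
  filter_upwards [hν] with p hp
  rcases hval p.1 with hx | hx <;> rcases hp with hy | hy <;>
    norm_num [Finset.sum_pair, indicator, mem_signCell, hx, hy]

theorem integrable_comp_of_ae_label [IsFiniteMeasure ν] (hν : ∀ᵐ p ∂ν, p.2 = 1 ∨ p.2 = -1)
    (hh : Measurable h) (hval : ∀ x, h x = 1 ∨ h x = -1) (φ : ℝ → ℝ → ℝ) :
    Integrable (fun p => φ (h p.1) p.2) ν := by
  refine Integrable.congr ?_ (comp_ae_eq_sum_indicator_signCell hν hval φ).symm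
  refine integrable_finsetSum _ fun s _ => integrable_finsetSum _ fun t _ => ?_
  exact (integrable_const _).indicator (measurableSet_signCell hh s t)

theorem integral_comp_of_ae_label [IsFiniteMeasure ν] (hν : ∀ᵐ p ∂ν, p.2 = 1 ∨ p.2 = -1)
    (hh : Measurable h) (hval : ∀ x, h x = 1 ∨ h x = -1) (φ : ℝ → ℝ → ℝ) :
    ∫ p, φ (h p.1) p.2 ∂ν = ∑ s ∈ ({1, -1} : Finset ℝ), ∑ t ∈ ({1, -1} : Finset ℝ),
      ν.real (signCell h s t) * φ s t := by
  have hcell (s t : ℝ) : Integrable ((signCell h s t).indicator fun _ => φ s t) ν :=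
    (integrable_const _).indicator (measurableSet_signCell hh s t)
  rw [integral_congr_ae (comp_ae_eq_sum_indicator_signCell hν hval φ),
    integral_finsetSum _ fun s _ => integrable_finsetSum _ fun t _ => hcell s t]
  refine Finset.sum_congr rfl fun s _ => ?_
  rw [integral_finsetSum _ fun t _ => hcell s t]
  simp only [integral_indicator_const _ (measurableSet_signCell hh _ _), smul_eq_mul]

end SignLabels

theorem integral_sample_mean_of_map_eq {α Ω : Type*} [MeasurableSpace α] [MeasurableSpace Ω]
    {P : Measure Ω} {μ : Measure α} {n : ℕ} (hn : n ≠ 0) {Z : Fin n → Ω → α}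
    (hZ : ∀ i, AEMeasurable (Z i) P) (hdist : ∀ i, P.map (Z i) = μ) {f : α → ℝ}
    (hf : Integrable f μ) :
    ∫ ω, (1 / n : ℝ) * ∑ i, f (Z i ω) ∂P = ∫ x, f x ∂μ := by
  have hcomp : ∀ i, ∫ ω, f (Z i ω) ∂P = ∫ x, f x ∂μ := fun i => by
    rw [← hdist i, integral_map (hZ i) ((hdist i).symm ▸ hf.aestronglyMeasurable)]
  rw [integral_const_mul, integral_finsetSum _ fun i _ =>
    ((hdist i).symm ▸ hf).comp_aemeasurable (hZ i)]
  simp only [hcomp, Finset.sum_const, Finset.card_univ, Fintype.card_fin, nsmul_eq_mul]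
  field_simp

theorem IsLinearDrift.PRisk_eq {𝒳 : Type*} [MeasurableSpace 𝒳] {μ μt : Measure (𝒳 × ℝ)}
    [IsFiniteMeasure μ] [IsFiniteMeasure μt] {h : 𝒳 → ℝ} {a1 a2 a3 a4 : ℝ}
    (hdrift : IsLinearDrift μ μt h a1 a2 a3 a4) (hμ : ∀ᵐ p ∂μ, p.2 = 1 ∨ p.2 = -1)
    (hh : Measurable h) (hval : ∀ x, h x = 1 ∨ h x = -1) :
    PRisk μt h = (1 - a1 - a2) * μ.real (signCell h 1 1) + (1 - a2) * μ.real (signCell h 1 (-1))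
      + (a3 + a4) * μ.real (signCell h (-1) 1) + a4 * μ.real (signCell h (-1) (-1)) := by
  obtain ⟨hμt_lab, hmarg, hpos, hneg⟩ := hdrift
  have hμt := ae_label_eq_one_or_neg_one hμt_lab
  have hA1 : MeasurableSet {x | h x = 1} := hh (measurableSet_singleton 1)
  have hA3 : MeasurableSet {x | h x = -1} := hh (measurableSet_singleton (-1))
  have hcell₁ := hpos _ hA1 subset_rfl
  have hcell₃ := hneg _ hA3 subset_rfl
  have hrow : μt.real ({x | h x = 1} ×ˢ univ) = μ.real ({x | h x = 1} ×ˢ univ) := by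
    rw [measureReal_def, measureReal_def, hmarg _ hA1]
  simp only [← measureReal_def, measureReal_prod_univ_of_ae_label hμ hA1,
    measureReal_prod_univ_of_ae_label hμ hA3, measureReal_prod_univ_of_ae_label hμt hA1]
    at hcell₁ hcell₃ hrow
  rw [PRisk_eq_of_ae_label hμt hh hval]
  unfold signCell
  linarith

theorem performative_empirical_risk_unbiased_general
    {𝒳 : Type*} [MeasurableSpace 𝒳]
    (μ μt : Measure (𝒳 × ℝ)) [IsProbabilityMeasure μ] [IsProbabilityMeasure μt]
    (hμlab : μ {p : 𝒳 × ℝ | p.2 ≠ 1 ∧ p.2 ≠ -1} = 0)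
    (h : 𝒳 → ℝ) (hmeas : Measurable h) (hval : ∀ x, h x = 1 ∨ h x = -1)
    (a1 a2 a3 a4 : ℝ)
    (hdrift : IsLinearDrift μ μt h a1 a2 a3 a4)
    -- the coefficients of the performative empirical risk
    (α1 α2 α3 α4 : ℝ)
    (hα1 : α1 = (2 - a1 - 2 * a2 - a3 - 2 * a4) / 4)
    (hα2 : α2 = (a3 - a1) / 4)
    (hα3 : α3 = (-a1 - a3) / 4)
    (hα4 : α4 = (2 - a1 - 2 * a2 + a3 + 2 * a4) / 4)
    -- the i.i.d. sample
    {Ω : Type*} [MeasurableSpace Ω] (P : Measure Ω)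
    (n : ℕ) (hn : 0 < n) (Z : Fin n → Ω → 𝒳 × ℝ)
    (hZmeas : ∀ i, Measurable (Z i))
    (hdist : ∀ i, Measure.map (Z i) P = μ) :
    ∫ ω, (1 / n : ℝ) * ∑ i : Fin n,
        (α1 * h (Z i ω).1 + α2 * (Z i ω).2 + α3 * (Z i ω).2 * h (Z i ω).1 + α4) ∂P
      = PRisk μt h := by
  have hμ := ae_label_eq_one_or_neg_one hμlab
  let φ (s t : ℝ) : ℝ := α1 * s + α2 * t + α3 * t * s + α4
  rw [integral_sample_mean_of_map_eq hn.ne' (fun i => (hZmeas i).aemeasurable) hdist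
      (integrable_comp_of_ae_label hμ hmeas hval φ),
    integral_comp_of_ae_label hμ hmeas hval φ, hdrift.PRisk_eq hμ hmeas hval]
  have h1 : (1 : ℝ) ≠ -1 := by norm_num
  simp only [Finset.sum_pair h1, φ, hα1, hα2, hα3, hα4]
  ring

/-- The performative empirical risk
`PRₙ(h) = (1/n) Σᵢ (α1 h(Xᵢ) + α2 Yᵢ + α3 Yᵢ h(Xᵢ) + α4)` computed from `n` i.i.d. samples
from `μ` is an unbiased estimator of the performative risk: `𝔼[PRₙ(h)] = PR(h)`. -/
theorem performative_empirical_risk_unbiased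
    {𝒳 : Type*} [MeasurableSpace 𝒳]
    (μ μt : Measure (𝒳 × ℝ)) [IsProbabilityMeasure μ] [IsProbabilityMeasure μt]
    (hμlab : μ {p : 𝒳 × ℝ | p.2 ≠ 1 ∧ p.2 ≠ -1} = 0)
    (h : 𝒳 → ℝ) (hmeas : Measurable h) (hval : ∀ x, h x = 1 ∨ h x = -1)
    (a1 a2 a3 a4 : ℝ)
    (ha2 : a2 ∈ Set.Icc (0 : ℝ) 1) (ha4 : a4 ∈ Set.Icc (0 : ℝ) 1)
    (ha1 : a1 ∈ Set.Icc (-a2) (1 - a2)) (ha3 : a3 ∈ Set.Icc (-a4) (1 - a4))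
    (hdrift : IsLinearDrift μ μt h a1 a2 a3 a4)
    -- the coefficients of the performative empirical risk
    (α1 α2 α3 α4 : ℝ)
    (hα1 : α1 = (2 - a1 - 2 * a2 - a3 - 2 * a4) / 4)
    (hα2 : α2 = (a3 - a1) / 4)
    (hα3 : α3 = (-a1 - a3) / 4)
    (hα4 : α4 = (2 - a1 - 2 * a2 + a3 + 2 * a4) / 4)
    -- the i.i.d. sample
    {Ω : Type*} [MeasurableSpace Ω] (P : Measure Ω) [IsProbabilityMeasure P]
    (n : ℕ) (hn : 0 < n) (Z : Fin n → Ω → 𝒳 × ℝ)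
    (hZmeas : ∀ i, Measurable (Z i))
    (hiid : iIndepFun Z P)
    (hdist : ∀ i, Measure.map (Z i) P = μ) :
    ∫ ω, (1 / n : ℝ) * ∑ i : Fin n,
        (α1 * h (Z i ω).1 + α2 * (Z i ω).2 + α3 * (Z i ω).2 * h (Z i ω).1 + α4) ∂P
      = PRisk μt h :=
  performative_empirical_risk_unbiased_general μ μt hμlab h hmeas hval a1 a2 a3 a4 hdrift α1 α2 α3
    α4 hα1 hα2 hα3 hα4 P n hn Z hZmeas hdist

end
end

section
/- In the imperfect-information setting where the proxies āᵢ are chosen as the midpoints of the intervals Iᵢ (so |āᵢ − aᵢ| ≤ εᵢ/2 for each i), for any sample (x₁,y₁),…,(xₙ,yₙ) in 𝒳 × {−1,1} and any classifier h : 𝒳 → {−1,1}, the empirical risks computed with the true coefficients αᵢ and the proxy coefficients ᾱᵢ satisfy |P̄Rₙ(h) − PRₙ(h)| ≤ (ε₁ + ε₂ + ε₃ + ε₄)/2. -/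
noncomputable section

/-- The coefficients `(α1, α2, α3, α4)` derived from drift parameters `(a1, a2, a3, a4)`. -/
def coef1 (a1 a2 a3 a4 : ℝ) : ℝ := (2 - a1 - 2 * a2 - a3 - 2 * a4) / 4
def coef2 (a1 a2 a3 a4 : ℝ) : ℝ := (a3 - a1) / 4
def coef3 (a1 a2 a3 a4 : ℝ) : ℝ := (-a1 - a3) / 4
def coef4 (a1 a2 a3 a4 : ℝ) : ℝ := (2 - a1 - 2 * a2 + a3 + 2 * a4) / 4

/-- The performative empirical risk with parameters `(b1, b2, b3, b4)` on a sample. -/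
def empRiskParams {𝒳 : Type*} (b1 b2 b3 b4 : ℝ) (n : ℕ) (h : 𝒳 → ℝ)
    (x : Fin n → 𝒳) (y : Fin n → ℝ) : ℝ :=
  (1 / n : ℝ) * ∑ i : Fin n,
    (coef1 b1 b2 b3 b4 * h (x i) + coef2 b1 b2 b3 b4 * y i
      + coef3 b1 b2 b3 b4 * y i * h (x i) + coef4 b1 b2 b3 b4)

/-- If the proxies `āᵢ` are the midpoints of the intervals
`Iᵢ = [cᵢ, cᵢ + εᵢ]` containing the true parameters `aᵢ` (so `|āᵢ − aᵢ| ≤ εᵢ/2`), then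
for any sample and any classifier `h : 𝒳 → {−1,1}`,
`|P̄Rₙ(h) − PRₙ(h)| ≤ (ε₁ + ε₂ + ε₃ + ε₄)/2`. -/
theorem empirical_risk_midpoint_proxy
    {𝒳 : Type*} (a1 a2 a3 a4 c1 c2 c3 c4 ε1 ε2 ε3 ε4 : ℝ)
    (hε1 : 0 ≤ ε1) (hε2 : 0 ≤ ε2) (hε3 : 0 ≤ ε3) (hε4 : 0 ≤ ε4)
    (h1 : a1 ∈ Set.Icc c1 (c1 + ε1)) (h2 : a2 ∈ Set.Icc c2 (c2 + ε2))
    (h3 : a3 ∈ Set.Icc c3 (c3 + ε3)) (h4 : a4 ∈ Set.Icc c4 (c4 + ε4))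
    -- the proxies are chosen to be the midpoints of the intervals
    (ab1 ab2 ab3 ab4 : ℝ)
    (hb1 : ab1 = c1 + ε1 / 2) (hb2 : ab2 = c2 + ε2 / 2)
    (hb3 : ab3 = c3 + ε3 / 2) (hb4 : ab4 = c4 + ε4 / 2)
    (n : ℕ) (hn : 0 < n)
    (x : Fin n → 𝒳) (y : Fin n → ℝ) (hy : ∀ i, y i = 1 ∨ y i = -1)
    (h : 𝒳 → ℝ) (hval : ∀ x', h x' = 1 ∨ h x' = -1) :
    |empRiskParams ab1 ab2 ab3 ab4 n h x y - empRiskParams a1 a2 a3 a4 n h x y|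
      ≤ (ε1 + ε2 + ε3 + ε4) / 2 := by

  obtain ⟨hl1, hr1⟩ := h1
  obtain ⟨hl2, hr2⟩ := h2
  obtain ⟨hl3, hr3⟩ := h3
  obtain ⟨hl4, hr4⟩ := h4
  set B : ℝ := (ε1 + ε2 + ε3 + ε4) / 2 with hB
  have hBnn : 0 ≤ B := by rw [hB]; linarith
  have key : ∀ i : Fin n,
      |(coef1 ab1 ab2 ab3 ab4 * h (x i) + coef2 ab1 ab2 ab3 ab4 * y i
        + coef3 ab1 ab2 ab3 ab4 * y i * h (x i) + coef4 ab1 ab2 ab3 ab4)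
       - (coef1 a1 a2 a3 a4 * h (x i) + coef2 a1 a2 a3 a4 * y i
        + coef3 a1 a2 a3 a4 * y i * h (x i) + coef4 a1 a2 a3 a4)| ≤ B := by
    intro i
    rcases hval (x i) with hh | hh <;> rcases hy i with hyy | hyy <;>
      simp only [coef1, coef2, coef3, coef4, hh, hyy, hb1, hb2, hb3, hb4, hB] <;>
      rw [abs_le] <;> constructor <;> (ring_nf; linarith)
  have hsplit : empRiskParams ab1 ab2 ab3 ab4 n h x y - empRiskParams a1 a2 a3 a4 n h x y
      = (1 / n : ℝ) * ∑ i : Fin n,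
        ((coef1 ab1 ab2 ab3 ab4 * h (x i) + coef2 ab1 ab2 ab3 ab4 * y i
          + coef3 ab1 ab2 ab3 ab4 * y i * h (x i) + coef4 ab1 ab2 ab3 ab4)
         - (coef1 a1 a2 a3 a4 * h (x i) + coef2 a1 a2 a3 a4 * y i
          + coef3 a1 a2 a3 a4 * y i * h (x i) + coef4 a1 a2 a3 a4)) := by
    unfold empRiskParams
    rw [Finset.sum_sub_distrib, mul_sub]
  rw [hsplit, abs_mul]
  have hn' : (0 : ℝ) < n := by exact_mod_cast hn
  have h1n : |(1 / n : ℝ)| = 1 / n := abs_of_pos (by positivity)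
  rw [h1n]
  have hsum : |∑ i : Fin n,
      ((coef1 ab1 ab2 ab3 ab4 * h (x i) + coef2 ab1 ab2 ab3 ab4 * y i
        + coef3 ab1 ab2 ab3 ab4 * y i * h (x i) + coef4 ab1 ab2 ab3 ab4)
       - (coef1 a1 a2 a3 a4 * h (x i) + coef2 a1 a2 a3 a4 * y i
        + coef3 a1 a2 a3 a4 * y i * h (x i) + coef4 a1 a2 a3 a4))| ≤ n * B := by
    calc _ ≤ ∑ i : Fin n, |(coef1 ab1 ab2 ab3 ab4 * h (x i) + coef2 ab1 ab2 ab3 ab4 * y i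
        + coef3 ab1 ab2 ab3 ab4 * y i * h (x i) + coef4 ab1 ab2 ab3 ab4)
       - (coef1 a1 a2 a3 a4 * h (x i) + coef2 a1 a2 a3 a4 * y i
        + coef3 a1 a2 a3 a4 * y i * h (x i) + coef4 a1 a2 a3 a4)| :=
        Finset.abs_sum_le_sum_abs _ _
      _ ≤ ∑ _i : Fin n, B := Finset.sum_le_sum (fun i _ => key i)
      _ = n * B := by simp [mul_comm]
  calc (1 / n : ℝ) * |_| ≤ (1 / n : ℝ) * (n * B) := by
        apply mul_le_mul_of_nonneg_left hsum (by positivity)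
    _ = B := by field_simp


end
end
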